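/- Let G and G' be simple graphs. If the path partial groups P(G) and P(G') are isomorphic as partial groups, then the graphs G and G' are isomorphic. -/

import Mathlib

set_option linter.unusedSectionVars false

open Monoid

namespace PaperPG

/-! ### Generic notions: letters, reduced / cyclically reduced words, reduced forms -/

section Letters

variable {ι : Type*} (H : ι → Type*) [∀ i, Group (H i)]

/-- A letter: a vertex/index together with an element of the corresponding group. -/
abbrev Ltr : Type _ := (i : ι) × H i

/-- A (combinatorially) reduced word: all letters are non-identity and adjacent letters
belong to distinct factors. -/
def IsRed (l : List (Ltr H)) : Prop :=
  (∀ x ∈ l, x.2 ≠ 1) ∧ l.Chain' fun a b => a.1 ≠ b.1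

/-- A cyclically reduced word: reduced, and if it has length at least `2`, its first and last
letters belong to distinct factors. -/
def IsCycRed (l : List (Ltr H)) : Prop :=
  IsRed H l ∧ ∀ a ∈ l.head?, ∀ b ∈ l.getLast?, 2 ≤ l.length → a.1 ≠ b.1

theorem isRed_nil : IsRed H ([] : List (Ltr H)) := by
  constructor
  · simp
  · show List.IsChain _ _; simp

theorem isCycRed_nil : IsCycRed H ([] : List (Ltr H)) := by
  refine ⟨isRed_nil H, ?_⟩
  simp

theorem isCycRed_single (x : Ltr H) (hx : x.2 ≠ 1) : IsCycRed H [x] := by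
  refine ⟨⟨by simpa using hx, by show List.IsChain _ _; simp⟩, ?_⟩
  simp

variable [DecidableEq ι] [∀ i, DecidableEq (H i)]

/-- The element of the free product `∗_{i} H i` determined by a word. -/
noncomputable def listProd (l : List (Ltr H)) : CoprodI H :=
  (l.map fun x => CoprodI.of x.2).prod

/-- The reduced form of a word: the unique reduced word representing the product of its
letters in the free product `∗_i H i`. -/
noncomputable def red (l : List (Ltr H)) : List (Ltr H) :=
  (CoprodI.Word.equiv (listProd H l)).toList

/-- The set of indices (vertices) occurring in a word. -/
def verts (l : List (Ltr H)) : Set ι := {i | ∃ x ∈ l, x.1 = i}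

/-- The formal inverse of a word: invert every letter and reverse. -/
def rawInv (l : List (Ltr H)) : List (Ltr H) :=
  (l.map fun x => (⟨x.1, x.2⁻¹⟩ : Ltr H)).reverse

end Letters

/-! ### Homomorphisms of (the underlying data of) partial groups -/

/-- `f` is a homomorphism of partial groups, from the partial group with domain `D₁` and
product `P₁` to the one with domain `D₂` and product `P₂`. -/
def IsHom {M N : Type*} (D₁ : Set (List M)) (P₁ : List M → M)
    (D₂ : Set (List N)) (P₂ : List N → N) (f : M → N) : Prop :=
  (∀ u ∈ D₁, u.map f ∈ D₂) ∧ ∀ u ∈ D₁, P₂ (u.map f) = f (P₁ u)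

theorem isHom_id {M : Type*} (D : Set (List M)) (P : List M → M) : IsHom D P D P id := by
  constructor <;> intro u hu <;> simp [hu]

theorem IsHom.comp {M₁ M₂ M₃ : Type*} {D₁ : Set (List M₁)} {P₁ : List M₁ → M₁}
    {D₂ : Set (List M₂)} {P₂ : List M₂ → M₂} {D₃ : Set (List M₃)} {P₃ : List M₃ → M₃}
    {g : M₂ → M₃} {f : M₁ → M₂} (hg : IsHom D₂ P₂ D₃ P₃ g) (hf : IsHom D₁ P₁ D₂ P₂ f) :
    IsHom D₁ P₁ D₃ P₃ (g ∘ f) := by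
  refine ⟨fun u hu => ?_, fun u hu => ?_⟩
  · rw [← List.map_map]
    exact hg.1 _ (hf.1 u hu)
  · rw [← List.map_map, hg.2 _ (hf.1 u hu), hf.2 u hu]
    rfl

/-! ### The partial group `M(G, H)` associated to a decorated graph -/

section Graph

variable {ι : Type*} (H : ι → Type*) [∀ i, Group (H i)]
  [DecidableEq ι] [∀ i, DecidableEq (H i)] (G : SimpleGraph ι)

/-- Membership in `M(G,H)`: a cyclically reduced word whose set of vertices is a clique. -/
def Mem (l : List (Ltr H)) : Prop := IsCycRed H l ∧ G.IsClique (verts H l)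

theorem mem_nil : Mem H G [] := by
  refine ⟨isCycRed_nil H, ?_⟩
  simp [verts, SimpleGraph.isClique_iff, Set.Pairwise]

theorem mem_single (v : ι) (h : H v) (hne : h ≠ 1) : Mem H G [⟨v, h⟩] := by
  refine ⟨isCycRed_single H _ hne, ?_⟩
  simp only [verts, SimpleGraph.isClique_iff, Set.Pairwise, List.mem_singleton]
  rintro a ⟨x, hx, rfl⟩ b ⟨y, hy, rfl⟩ hne'
  subst hx; subst hy
  exact absurd rfl hne'

/-- A word with letters elements of `M(G,H)` is in the domain `D(G,H)` iff all its letters are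
elements of `M(G,H)`, all occurring vertices lie in a common clique, and the reduced form of
any subproduct `u_i ⋯ u_j` is cyclically reduced. -/
def InD (W : List (List (Ltr H))) : Prop :=
  (∀ u ∈ W, Mem H G u) ∧
  G.IsClique {i | ∃ u ∈ W, i ∈ verts H u} ∧
  ∀ i j : ℕ, i ≤ j → j < W.length →
    IsCycRed H (red H (((W.drop i).take (j + 1 - i)).flatten))

/-- The underlying set of the partial group `M(G,H)`. -/
def Carrier : Type _ := {l : List (Ltr H) // Mem H G l}

/-- The domain of the partial group `M(G,H)`. -/
def pgD : Set (List (Carrier H G)) := {W | InD H G (W.map Subtype.val)}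

/-- The unit of the partial group `M(G,H)`: the empty word. -/
def one : Carrier H G := ⟨[], mem_nil H G⟩

/-- The product map of the partial group `M(G,H)`: the reduced form of the concatenation
(junk value `1` outside of the domain). -/
noncomputable def pgPi (W : List (Carrier H G)) : Carrier H G := by
  classical exact if h : Mem H G (red H (W.map Subtype.val).flatten) then ⟨_, h⟩ else one H G

/-- The inversion of the partial group `M(G,H)` (junk value `1` if the result were not a
member, which never happens). -/
noncomputable def invCar (x : Carrier H G) : Carrier H G := by
  classical exact if h : Mem H G (rawInv H x.val) then ⟨_, h⟩ else one H G

/-- The subset `H̃ᵥ` of `M(G,H)`: the empty word together with the one-letter words with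
letter a nontrivial element of `H v`. -/
def Htilde (v : ι) : Set (Carrier H G) :=
  {x | x.val = [] ∨ ∃ h : H v, h ≠ 1 ∧ x.val = [⟨v, h⟩]}

end Graph

/-! ### Induced maps -/

section Induced

variable {ι ι' : Type*} (H : ι → Type*) [∀ i, Group (H i)]
  [DecidableEq ι] [∀ i, DecidableEq (H i)] (G : SimpleGraph ι)
  (H' : ι' → Type*) [∀ i, Group (H' i)]
  [DecidableEq ι'] [∀ i, DecidableEq (H' i)] (G' : SimpleGraph ι')

/-- The letterwise map on words induced by a map of vertices `fG` and group homomorphisms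
`fH v : H v →* H' (fG v)`. -/
def rawInduced (fG : ι → ι') (fH : ∀ i, H i →* H' (fG i)) (l : List (Ltr H)) :
    List (Ltr H') :=
  l.map fun x => ⟨fG x.1, fH x.1 x.2⟩

/-- The map `M(f_G, {f_v}) : M(G,H) → M(G',H')` (junk value `1` if the image word were not a
member; this never happens when the `fH v` are injective). -/
noncomputable def inducedCar (fG : ι → ι') (fH : ∀ i, H i →* H' (fG i))
    (x : Carrier H G) : Carrier H' G' := by
  classical exact if h : Mem H' G' (rawInduced H H' fG fH x.val) then ⟨_, h⟩ else one H' G'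

/-- A homomorphism of partial groups `M(G,H) → M(G',H')` has torsion-free kernel if the only
element of finite order (as an element of the ambient free product) sent to `1` is `1`. -/
def TFKer (f : Carrier H G → Carrier H' G') : Prop :=
  ∀ x : Carrier H G, f x = one H' G' → IsOfFinOrder (listProd H x.val) → x = one H G

end Induced

/-! ### Automorphism groups -/

section Aut

variable {ι : Type*} (H : ι → Type*) [∀ i, Group (H i)]
  [DecidableEq ι] [∀ i, DecidableEq (H i)] (G : SimpleGraph ι)

/-- The automorphism group of the partial group `M(G,H)`, as a subgroup of the permutation
group of its carrier: bijections that are homomorphisms in both directions. -/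
noncomputable def pgAut : Subgroup (Equiv.Perm (Carrier H G)) where
  carrier := {f | IsHom (pgD H G) (pgPi H G) (pgD H G) (pgPi H G) f ∧
    IsHom (pgD H G) (pgPi H G) (pgD H G) (pgPi H G) f.symm}
  one_mem' := ⟨isHom_id _ _, isHom_id _ _⟩
  mul_mem' := by
    rintro f g ⟨hf, hf'⟩ ⟨hg, hg'⟩
    exact ⟨hf.comp hg, hg'.comp hf'⟩
  inv_mem' := by
    rintro f ⟨hf, hf'⟩
    exact ⟨hf', by exact hf⟩

/-- The automorphism group of a simple graph, as a subgroup of the permutation group of its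
vertices: bijections such that both the map and its inverse send edges to edges. -/
def graphAut : Subgroup (Equiv.Perm ι) where
  carrier := {σ | (∀ a b, G.Adj a b → G.Adj (σ a) (σ b)) ∧
    (∀ a b, G.Adj a b → G.Adj (σ.symm a) (σ.symm b))}
  one_mem' := ⟨fun a b h => h, fun a b h => h⟩
  mul_mem' := by
    rintro f g ⟨hf, hf'⟩ ⟨hg, hg'⟩
    exact ⟨fun a b h => hf _ _ (hg _ _ h), fun a b h => hg' _ _ (hf' _ _ h)⟩
  inv_mem' := by
    rintro f ⟨hf, hf'⟩
    exact ⟨hf', by exact hf⟩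

/-- An automorphism `f` of `M(G,H)` covers the vertex map `σ` if for every vertex `v`,
`f` sends the nontrivial elements of `H̃ᵥ` into `H̃_{σ v}`. -/
def CoversVia (f : Carrier H G → Carrier H G) (σ : ι → ι) : Prop :=
  ∀ (v : ι) (h : H v) (hne : h ≠ 1),
    ∃ h' : H (σ v), h' ≠ 1 ∧ (f ⟨[⟨v, h⟩], mem_single H G v h hne⟩).val = [⟨σ v, h'⟩]

end Aut

/-! ### Subgroups and locally finite subgroups of partial groups -/

/-- A subset `N` is a subgroup of the partial group with data `(D, P, inv)`: it is closed
under inversion, every word with letters in `N` is in the domain `D`, and `P` maps such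
words into `N`. -/
def IsSubgroupOf {M : Type*} (D : Set (List M)) (P : List M → M) (inv : M → M)
    (N : Set M) : Prop :=
  (∀ x ∈ N, inv x ∈ N) ∧ ∀ W : List M, (∀ u ∈ W, u ∈ N) → W ∈ D ∧ P W ∈ N

/-- A subgroup `N` of a partial group is locally finite: every finite subset of `N` is
contained in a finite subgroup contained in `N` (i.e. every finitely generated subgroup of the
group `N` is finite). -/
def IsLocFinSubgroupOf {M : Type*} (D : Set (List M)) (P : List M → M) (inv : M → M)
    (N : Set M) : Prop :=
  IsSubgroupOf D P inv N ∧
    ∀ S : Set M, S ⊆ N → S.Finite →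
      ∃ K : Set M, S ⊆ K ∧ K ⊆ N ∧ IsSubgroupOf D P inv K ∧ K.Finite

end PaperPG

namespace PaperPG

/-- The group `ℤ/2`, written multiplicatively: the decorating group of path partial groups. -/
abbrev Z2 : Type := Multiplicative (ZMod 2)

section Red
variable {ι : Type*} [DecidableEq ι] {H : ι → Type*} [∀ i, Group (H i)]
  [∀ i, DecidableEq (H i)]

def wordOf (l : List (Ltr H)) (h : IsRed H l) : CoprodI.Word H := ⟨l, h.1, h.2⟩

theorem red_of_isRed {l : List (Ltr H)} (h : IsRed H l) : red H l = l := by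
  have h1 : listProd H l = (wordOf l h).prod := rfl
  have h2 : CoprodI.Word.equiv (listProd H l) = wordOf l h := by
    rw [h1]; exact CoprodI.Word.equiv.apply_symm_apply _
  simp only [red, h2, wordOf]

theorem red_of_prod_one {l : List (Ltr H)} (h : listProd H l = 1) : red H l = [] := by
  have h0 : listProd H ([] : List (Ltr H)) = 1 := by simp [listProd]
  have := red_of_isRed (isRed_nil H)
  simp only [red, h0] at this
  simp only [red, h]
  exact this

theorem listProd_single (x : Ltr H) : listProd H [x] = CoprodI.of x.2 := by
  simp [listProd]

theorem listProd_pair (x y : Ltr H) :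
    listProd H [x, y] = CoprodI.of x.2 * CoprodI.of y.2 := by
  simp [listProd]

end Red

theorem pgPi_val {ι : Type*} {H : ι → Type*} [∀ i, Group (H i)]
    [DecidableEq ι] [∀ i, DecidableEq (H i)] {G : SimpleGraph ι}
    (W : List (Carrier H G)) (h : Mem H G (red H (W.map Subtype.val).flatten)) :
    (pgPi H G W).val = red H (W.map Subtype.val).flatten := by
  simp only [pgPi]
  exact congrArg Subtype.val (dif_pos h)

theorem map_val_nil' {ι : Type*} {H : ι → Type*} [∀ i, Group (H i)]
    [DecidableEq ι] [∀ i, DecidableEq (H i)] {G : SimpleGraph ι} :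
    (([] : List (Carrier H G)).map Subtype.val) = [] := rfl

theorem map_val_cons' {ι : Type*} {H : ι → Type*} [∀ i, Group (H i)]
    [DecidableEq ι] [∀ i, DecidableEq (H i)] {G : SimpleGraph ι}
    (x : Carrier H G) (W : List (Carrier H G)) :
    ((x :: W).map Subtype.val) = x.val :: W.map Subtype.val := rfl

section Z2L

theorem eZ_ne_one : (Multiplicative.ofAdd (1 : ZMod 2)) ≠ 1 := by decide

theorem z2_eq_e (h : Z2) (hne : h ≠ 1) : h = Multiplicative.ofAdd 1 := by
  have : ∀ h : Z2, h ≠ 1 → h = Multiplicative.ofAdd 1 := by decide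
  exact this h hne

variable {ι : Type*} [DecidableEq ι] (G : SimpleGraph ι)

local notation "e" => (Multiplicative.ofAdd (1 : ZMod 2))

/-- The singleton element of the path partial group at vertex `v`. -/
def sing (v : ι) : Carrier (fun _ : ι => Z2) G :=
  ⟨[⟨v, e⟩], mem_single (fun _ : ι => Z2) G v e eZ_ne_one⟩

theorem sing_inj : Function.Injective (sing G) := by
  intro a b h
  have := congrArg Subtype.val h
  simp only [sing, List.cons.injEq] at this
  exact congrArg Sigma.fst this.1

theorem sing_ne_one (v : ι) : sing G v ≠ one _ G := by
  intro h
  have := congrArg Subtype.val h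
  simp [sing, one] at this

theorem pgD_nil : ([] : List (Carrier (fun _ : ι => Z2) G)) ∈ pgD _ G := by
  refine ⟨by simp [map_val_nil'], ?_, by simp [map_val_nil']⟩
  convert G.isClique_empty using 1
  ext i; simp [map_val_nil']

theorem pgPi_nil : pgPi (fun _ : ι => Z2) G [] = one _ G := by
  have hr : red (fun _ : ι => Z2) (([] : List (Carrier (fun _ : ι => Z2) G)).map
      Subtype.val).flatten = [] := by
    simp only [map_val_nil', List.map_nil, List.flatten_nil]
    exact red_of_isRed (isRed_nil _)
  simp only [pgPi]
  refine (dif_pos (by rw [hr]; exact mem_nil _ G)).trans ?_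
  exact Subtype.ext hr

/-- key computation: `Π(x, x) = 1` characterises the singletons among nonunits. -/
theorem pi_self (x : Carrier (fun _ : ι => Z2) G) (hx : x ≠ one _ G)
    (h : pgPi _ G [x, x] = one _ G) : ∃ v, x = sing G v := by
  obtain ⟨⟨⟨hne1, hch⟩, hcyc⟩, hclq⟩ := x.property
  rcases hl : x.val with _ | ⟨a, _ | ⟨b, t⟩⟩
  · exact absurd (Subtype.ext hl) hx
  · refine ⟨a.1, Subtype.ext ?_⟩
    have ha : a.2 = e := z2_eq_e a.2 (hne1 a (by rw [hl]; simp))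
    rw [hl, sing]
    congr 1
    exact Sigma.ext rfl (heq_of_eq ha)
  · exfalso
    set l := x.val with hlv
    have hlen : 2 ≤ l.length := by rw [hl]; simp
    have hlne : l ≠ [] := by rw [hl]; simp
    -- l ++ l is reduced
    have hred : IsRed (fun _ : ι => Z2) (l ++ l) := by
      refine ⟨fun y hy => hne1 y ((List.mem_append.1 hy).elim id id), ?_⟩
      show List.IsChain _ _; rw [List.isChain_append]
      refine ⟨hch, hch, fun p hp q hq => ?_⟩
      exact (hcyc q hq p hp hlen).symm
    have hrr : red (fun _ : ι => Z2) (l ++ l) = l ++ l := red_of_isRed hred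
    -- l ++ l is cyclically reduced
    have hcyc2 : IsCycRed (fun _ : ι => Z2) (l ++ l) := by
      refine ⟨hred, fun p hp q hq _ => ?_⟩
      rw [List.head?_append, Option.or_self] at hp
      rw [List.getLast?_append, Option.or_self] at hq
      exact hcyc p hp q hq hlen
    -- verts (l ++ l) = verts l
    have hverts : verts (fun _ : ι => Z2) (l ++ l) = verts (fun _ : ι => Z2) l := by
      ext i; simp only [verts, Set.mem_setOf_eq, List.mem_append]
      constructor
      · rintro ⟨y, hy | hy, rfl⟩ <;> exact ⟨y, hy, rfl⟩
      · rintro ⟨y, hy, rfl⟩; exact ⟨y, Or.inl hy, rfl⟩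
    have hmem : Mem (fun _ : ι => Z2) G (red (fun _ : ι => Z2) (l ++ l)) := by
      rw [hrr]; exact ⟨hcyc2, hverts ▸ hclq⟩
    have hfl : (([x, x].map Subtype.val).flatten : List (Ltr (fun _ : ι => Z2))) = l ++ l := by
      simp [hlv, map_val_cons', map_val_nil']
    have hmem' : Mem (fun _ : ι => Z2) G
        (red (fun _ : ι => Z2) (([x, x].map Subtype.val).flatten)) := by
      rw [hfl]; exact hmem
    have hval := pgPi_val [x, x] hmem'
    rw [h, hfl, hrr] at hval
    have : l ++ l = ([] : List (Ltr (fun _ : ι => Z2))) := hval.symm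
    rw [hl] at this
    simp at this

theorem of_e_sq : (CoprodI.of (M := fun _ : ι => Z2) (i := v) (Multiplicative.ofAdd 1)) *
    CoprodI.of (M := fun _ : ι => Z2) (i := v) (Multiplicative.ofAdd 1) = 1 := by
  rw [← map_mul]
  have : (Multiplicative.ofAdd (1 : ZMod 2)) * Multiplicative.ofAdd 1 = 1 := by decide
  rw [this, map_one]

theorem isRed_single (x : Ltr (fun _ : ι => Z2)) (hx : x.2 ≠ 1) :
    IsRed (fun _ : ι => Z2) [x] := ⟨by simpa using hx, by show List.IsChain _ _; simp⟩

theorem pgPi_sing_sing (v : ι) : pgPi (fun _ : ι => Z2) G [sing G v, sing G v] = one _ G := by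
  have hfl : (([sing G v, sing G v].map Subtype.val).flatten : List (Ltr (fun _ : ι => Z2)))
      = [⟨v, e⟩, ⟨v, e⟩] := by simp only [map_val_cons', map_val_nil']; simp [sing]
  have hred : red (fun _ : ι => Z2) (([sing G v, sing G v].map Subtype.val).flatten) = [] := by
    rw [hfl]
    refine red_of_prod_one ?_
    rw [listProd_pair]
    exact of_e_sq
  have hmem : Mem (fun _ : ι => Z2) G
      (red (fun _ : ι => Z2) (([sing G v, sing G v].map Subtype.val).flatten)) := by
    rw [hred]; exact mem_nil _ G
  exact Subtype.ext ((pgPi_val _ hmem).trans hred)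

theorem pair_mem_pgD (v w : ι) (h : v = w ∨ G.Adj v w) :
    [sing G v, sing G w] ∈ pgD (fun _ : ι => Z2) G := by
  have hmap : ([sing G v, sing G w].map Subtype.val : List (List (Ltr (fun _ : ι => Z2))))
      = [[⟨v, e⟩], [⟨w, e⟩]] := by simp only [map_val_cons', map_val_nil']; simp [sing]
  show InD _ G _
  rw [hmap]
  refine ⟨?_, ?_, ?_⟩
  · intro u hu
    simp only [List.mem_cons, List.not_mem_nil, or_false] at hu
    rcases hu with rfl | rfl
    · exact mem_single (fun _ : ι => Z2) G v e eZ_ne_one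
    · exact mem_single (fun _ : ι => Z2) G w e eZ_ne_one
  · have key : ∀ k : ι, (∃ u ∈ [[(⟨v, e⟩ : Ltr (fun _ : ι => Z2))], [⟨w, e⟩]],
        k ∈ verts (fun _ : ι => Z2) u) → k = v ∨ k = w := by
      rintro k ⟨u, hu, x, hx, rfl⟩
      simp only [List.mem_cons, List.not_mem_nil, or_false] at hu
      rcases hu with rfl | rfl <;> simp only [List.mem_singleton] at hx <;>
        subst hx <;> simp
    intro i hi j hj hij
    have hi' := key i hi
    have hj' := key j hj
    rcases h with rfl | hadj
    · rcases hi' with rfl | rfl <;> rcases hj' with rfl | rfl <;> exact absurd rfl hij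
    · rcases hi' with rfl | rfl <;> rcases hj' with rfl | rfl
      · exact absurd rfl hij
      · exact hadj
      · exact hadj.symm
      · exact absurd rfl hij
  · intro i j hij hjlt
    simp only [List.length_cons, List.length_nil] at hjlt
    interval_cases j <;> interval_cases i
    · have : ((([[(⟨v, e⟩ : Ltr (fun _ : ι => Z2))], [⟨w, e⟩]].drop 0).take 1).flatten)
          = [⟨v, e⟩] := by simp
      rw [this, red_of_isRed (isRed_single _ eZ_ne_one)]
      exact isCycRed_single _ _ eZ_ne_one
    · have : ((([[(⟨v, e⟩ : Ltr (fun _ : ι => Z2))], [⟨w, e⟩]].drop 0).take 2).flatten)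
          = [⟨v, e⟩, ⟨w, e⟩] := by simp
      rw [this]
      rcases h with rfl | hadj
      · rw [red_of_prod_one (by rw [listProd_pair]; exact of_e_sq)]
        exact isCycRed_nil _
      · have hvw : v ≠ w := hadj.ne
        have hred : IsRed (fun _ : ι => Z2) [⟨v, e⟩, ⟨w, e⟩] := by
          refine ⟨?_, ?_⟩
          · intro x hx
            simp only [List.mem_cons, List.not_mem_nil, or_false] at hx
            rcases hx with rfl | rfl <;> exact eZ_ne_one
          · show List.IsChain _ _; simpa using hvw
        rw [red_of_isRed hred]
        refine ⟨hred, ?_⟩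
        intro a ha b hb _
        simp only [List.head?_cons, Option.mem_def, Option.some.injEq] at ha
        simp only [List.getLast?_cons_cons, List.getLast?_singleton,
          Option.mem_def, Option.some.injEq] at hb
        subst ha; subst hb
        exact hvw
    · have : ((([[(⟨v, e⟩ : Ltr (fun _ : ι => Z2))], [⟨w, e⟩]].drop 1).take 1).flatten)
          = [⟨w, e⟩] := by simp
      rw [this, red_of_isRed (isRed_single _ eZ_ne_one)]
      exact isCycRed_single _ _ eZ_ne_one

theorem adj_of_pair_mem {a b : ι} (hD : [sing G a, sing G b] ∈ pgD (fun _ : ι => Z2) G)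
    (hab : a ≠ b) : G.Adj a b := by
  have hclq := hD.2.1
  have ha : a ∈ {i | ∃ u ∈ [sing G a, sing G b].map Subtype.val,
      i ∈ verts (fun _ : ι => Z2) u} :=
    ⟨(sing G a).val, by simp [map_val_cons'], ⟨⟨a, e⟩, by simp [sing], rfl⟩⟩
  have hb : b ∈ {i | ∃ u ∈ [sing G a, sing G b].map Subtype.val,
      i ∈ verts (fun _ : ι => Z2) u} :=
    ⟨(sing G b).val, by simp [map_val_cons'], ⟨⟨b, e⟩, by simp [sing], rfl⟩⟩
  exact hclq ha hb hab

end Z2L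

section Main

variable {ι ι' : Type*} [DecidableEq ι] [DecidableEq ι']
  (G : SimpleGraph ι) (G' : SimpleGraph ι')
  (f : Carrier (fun _ : ι => Z2) G → Carrier (fun _ : ι' => Z2) G')
  (hf : IsHom (pgD (fun _ : ι => Z2) G) (pgPi (fun _ : ι => Z2) G)
    (pgD (fun _ : ι' => Z2) G') (pgPi (fun _ : ι' => Z2) G') f)

include hf in
theorem hom_one : f (one _ G) = one _ G' := by
  have h1 := hf.2 [] (pgD_nil G)
  simp only [List.map_nil] at h1
  rw [pgPi_nil, pgPi_nil] at h1
  exact h1.symm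

variable (g : Carrier (fun _ : ι' => Z2) G' → Carrier (fun _ : ι => Z2) G)
  (hg : IsHom (pgD (fun _ : ι' => Z2) G') (pgPi (fun _ : ι' => Z2) G')
    (pgD (fun _ : ι => Z2) G) (pgPi (fun _ : ι => Z2) G) g)
  (hgf : Function.LeftInverse g f)

include hf hg hgf in
theorem exists_sing (v : ι) : ∃ v', f (sing G v) = sing G' v' := by
  have hD := pair_mem_pgD G v v (Or.inl rfl)
  have h1 := hf.2 _ hD
  rw [pgPi_sing_sing, hom_one G G' f hf] at h1
  simp only [List.map_cons, List.map_nil] at h1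
  have hne : f (sing G v) ≠ one _ G' := by
    intro hh
    have h2 := congrArg g hh
    rw [hgf, hom_one G' G g hg] at h2
    exact sing_ne_one G v h2
  obtain ⟨v', hv'⟩ := pi_self G' (f (sing G v)) hne h1
  exact ⟨v', hv'⟩

include hf in
theorem adj_hom (σ : ι → ι') (hσ : ∀ v, f (sing G v) = sing G' (σ v))
    (hinj : Function.Injective σ) {v w : ι} (h : G.Adj v w) : G'.Adj (σ v) (σ w) := by
  have hD := pair_mem_pgD G v w (Or.inr h)
  have hD' := hf.1 _ hD
  simp only [List.map_cons, List.map_nil, hσ] at hD'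
  exact adj_of_pair_mem G' hD' (fun hh => h.ne (hinj hh))

end Main


/-- If the path partial groups `P(G)` and `P(G')` are isomorphic as partial
groups, then the graphs `G` and `G'` are isomorphic. -/
theorem statement9 {ι ι' : Type*} [DecidableEq ι] [DecidableEq ι']
    (G : SimpleGraph ι) (G' : SimpleGraph ι')
    (f : Carrier (fun _ : ι => Z2) G → Carrier (fun _ : ι' => Z2) G')
    (hf : IsHom (pgD (fun _ : ι => Z2) G) (pgPi (fun _ : ι => Z2) G)
      (pgD (fun _ : ι' => Z2) G') (pgPi (fun _ : ι' => Z2) G') f)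
    (g : Carrier (fun _ : ι' => Z2) G' → Carrier (fun _ : ι => Z2) G)
    (hg : IsHom (pgD (fun _ : ι' => Z2) G') (pgPi (fun _ : ι' => Z2) G')
      (pgD (fun _ : ι => Z2) G) (pgPi (fun _ : ι => Z2) G) g)
    (hgf : Function.LeftInverse g f) (hfg : Function.RightInverse g f) :
    Nonempty (G ≃g G') := by
  classical
  choose σ hσ using exists_sing G G' f hf g hg hgf
  choose τ hτ using exists_sing G' G g hg f hf hfg
  have li : Function.LeftInverse τ σ := by
    intro v
    apply sing_inj G
    rw [← hτ, ← hσ, hgf]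
  have ri : Function.RightInverse τ σ := by
    intro v
    apply sing_inj G'
    rw [← hσ, ← hτ, hfg]
  refine ⟨⟨⟨σ, τ, li, ri⟩, ?_⟩⟩
  intro a b
  constructor
  · intro h
    simp only [Equiv.coe_fn_mk] at h
    have := adj_hom G' G g hg τ hτ ri.injective h
    rwa [li, li] at this
  · intro h
    simp only [Equiv.coe_fn_mk]
    exact adj_hom G G' f hf σ hσ li.injective h

end PaperPG
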